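/- arXiv:1303.2929 — 3 statements merged into one kernel-verified Lean document; each statement's English description precedes it below -/
import Mathlib

section
/- For all integers c ≥ 0, d ≥ 0, and a ≥ 0, the following identity of polynomials in ℤ[q] holds: ∑_{i+j=a, i,j≥0} q^{(c+2)·j}·[c+i choose i]_q·[d+j choose j]_q = [c+d+a+2 choose a]_q − q^{c+1}·[c+d+a+1 choose a−1]_q (where the last Gaussian binomial is interpreted as 0 when a = 0). -/
open Polynomial Finset

/-!
The series `∏_{k=0}^{c} 1/(1 - q^k t)` has `[c+i choose i]_q` as its `tⁱ`-coefficient: comparing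
`tⁱ`-coefficients in `F(t)(1 - t) = F(qt)(1 - q^{c+1} t)` gives the product formula. Hence the
left-hand side is the `tᵃ`-coefficient of
`∏_{k=0}^{c} 1/(1 - q^k t) · ∏_{k=c+2}^{c+d+2} 1/(1 - q^k t)`, and this product equals
`(1 - q^{c+1} t) ∏_{k=0}^{c+d+2} 1/(1 - q^k t)`, whose `tᵃ`-coefficient is the right-hand side.
-/

section QBinomialSeries

open PowerSeries (rescale)

variable {R : Type*} [CommRing R] (q : R)

/-- `qPoch q e n = ∏_{k=e}^{e+n-1} (1 - q^k t)`. -/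
noncomputable def qPoch (e n : ℕ) : PowerSeries R :=
  ∏ k ∈ range n, rescale (q ^ (e + k)) (1 - PowerSeries.X)

/-- `∏_{k=0}^{c} 1/(1 - q^k t)`. -/
noncomputable def qBinomSeries (c : ℕ) : PowerSeries R :=
  ∏ k ∈ range (c + 1), rescale (q ^ k) (PowerSeries.mk 1)

theorem qPoch_add (e m n : ℕ) : qPoch q e (m + n) = qPoch q e m * qPoch q (e + m) n := by
  simp only [qPoch, prod_range_add, add_assoc]

theorem rescale_qPoch (s e n : ℕ) : rescale (q ^ s) (qPoch q e n) = qPoch q (s + e) n := by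
  simp only [qPoch, map_prod, PowerSeries.rescale_rescale, ← pow_add, add_comm s, add_assoc]

theorem qBinomSeries_mul_qPoch (c : ℕ) : qBinomSeries q c * qPoch q 0 (c + 1) = 1 := by
  simp only [qBinomSeries, qPoch, zero_add, ← prod_mul_distrib, ← map_mul,
    PowerSeries.mk_one_mul_one_sub_eq_one, map_one, prod_const_one]

theorem coeff_mul_qPoch_one (e n : ℕ) (f : PowerSeries R) :
    PowerSeries.coeff n (f * qPoch q e 1) =
      PowerSeries.coeff n f - q ^ e * (if n = 0 then 0 else PowerSeries.coeff (n - 1) f) := by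
  have hfactor : f * qPoch q e 1 = f - PowerSeries.C (q ^ e) * (PowerSeries.X * f) := by
    simp only [qPoch, range_one, prod_singleton, add_zero, map_sub, map_one,
      PowerSeries.rescale_X]
    rw [mul_sub, mul_one, mul_comm, mul_assoc]
  rw [hfactor, map_sub, PowerSeries.coeff_C_mul]
  rcases n with _ | n
  · simp
  · simp [PowerSeries.coeff_succ_X_mul]

/-- For `s = 0` this is the q-Vandermonde identity; the missing factors `k = c+1, …, c+s` of the
right-hand product account for the shift by `s`. -/
theorem qBinomSeries_mul_rescale_qBinomSeries (c d s : ℕ) :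
    qBinomSeries q c * rescale (q ^ (c + 1 + s)) (qBinomSeries q d) =
      qPoch q (c + 1) s * qBinomSeries q (c + 1 + s + d) := by
  set A := qBinomSeries q c * rescale (q ^ (c + 1 + s)) (qBinomSeries q d)
  have hA : A * qPoch q 0 (c + 1 + s + d + 1) = qPoch q (c + 1) s := calc
    _ = qBinomSeries q c * qPoch q 0 (c + 1) *
          rescale (q ^ (c + 1 + s)) (qBinomSeries q d * qPoch q 0 (d + 1)) *
          qPoch q (c + 1) s := by
      rw [add_assoc _ d, qPoch_add, qPoch_add, map_mul, rescale_qPoch]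
      simp only [A, zero_add, add_zero]
      ring
    _ = qPoch q (c + 1) s := by
      rw [qBinomSeries_mul_qPoch, qBinomSeries_mul_qPoch, map_one, one_mul, one_mul]
  calc A = A * (qPoch q 0 (c + 1 + s + d + 1) * qBinomSeries q (c + 1 + s + d)) := by
        rw [mul_comm (qPoch _ _ _), qBinomSeries_mul_qPoch, mul_one]
    _ = qPoch q (c + 1) s * qBinomSeries q (c + 1 + s + d) := by rw [← mul_assoc, hA]

theorem qBinomSeries_mul_qPoch_zero_one (c : ℕ) :
    qBinomSeries q c * qPoch q 0 1 = rescale (q ^ 1) (qBinomSeries q c) * qPoch q (c + 1) 1 := by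
  have hshift := congrArg (rescale (q ^ 1)) (qBinomSeries_mul_qPoch q c)
  rw [map_mul, rescale_qPoch, add_zero, map_one] at hshift
  have hsplit : qPoch q 0 1 * qPoch q 1 (c + 1) = qPoch q 0 (c + 1) * qPoch q (c + 1) 1 := by
    rw [← qPoch_add, add_comm, qPoch_add, zero_add]
  linear_combination (-(qBinomSeries q c * qPoch q 0 1)) * hshift +
    rescale (q ^ 1) (qBinomSeries q c) * qBinomSeries q c * hsplit +
    rescale (q ^ 1) (qBinomSeries q c) * qPoch q (c + 1) 1 * qBinomSeries_mul_qPoch q c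

theorem coeff_zero_qBinomSeries (c : ℕ) : PowerSeries.coeff 0 (qBinomSeries q c) = 1 := by
  simp only [qBinomSeries, PowerSeries.coeff_zero_eq_constantCoeff, map_prod]
  simp [← PowerSeries.coeff_zero_eq_constantCoeff_apply]

theorem coeff_succ_qBinomSeries_mul (c i : ℕ) :
    PowerSeries.coeff (i + 1) (qBinomSeries q c) * (1 - q ^ (i + 1)) =
      PowerSeries.coeff i (qBinomSeries q c) * (1 - q ^ (c + 1 + i)) := by
  have h := congrArg (PowerSeries.coeff (i + 1)) (qBinomSeries_mul_qPoch_zero_one q c)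
  simp only [coeff_mul_qPoch_one, PowerSeries.coeff_rescale, Nat.add_one_ne_zero, if_false,
    Nat.add_sub_cancel, pow_zero, pow_one, one_mul] at h
  linear_combination h

theorem coeff_qBinomSeries_mul_prod (c i : ℕ) :
    PowerSeries.coeff i (qBinomSeries q c) * ∏ l ∈ Icc 1 i, (1 - q ^ l) =
      ∏ l ∈ Icc 1 i, (1 - q ^ (c + l)) := by
  induction i with
  | zero => simp [coeff_zero_qBinomSeries]
  | succ i ih =>
    rw [prod_Icc_succ_top (by omega), prod_Icc_succ_top (by omega), ← ih, ← mul_assoc,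
      mul_right_comm, coeff_succ_qBinomSeries_mul]
    ring

end QBinomialSeries

theorem prod_one_sub_X_pow_ne_zero (i : ℕ) : ∏ l ∈ Icc 1 i, (1 - (X : ℤ[X]) ^ l) ≠ 0 :=
  prod_ne_zero_iff.mpr fun l hl h => by
    simpa [(Nat.one_le_iff_ne_zero.mp (mem_Icc.mp hl).1).symm] using
      congrArg (Polynomial.coeff · 0) h

theorem eq_coeff_qBinomSeries_of_mul_prod {p : ℤ[X]} (c i : ℕ)
    (h : p * ∏ l ∈ Icc 1 i, (1 - X ^ l) = ∏ l ∈ Icc 1 i, (1 - X ^ (c + l))) :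
    p = PowerSeries.coeff i (qBinomSeries (X : ℤ[X]) c) :=
  mul_right_cancel₀ (prod_one_sub_X_pow_ne_zero i) (by rw [h, coeff_qBinomSeries_mul_prod])

theorem gaussBinomial_vandermonde_type_shifted_general
    (gb : ℕ → ℕ → Polynomial ℤ)
    (hgb : ∀ m j : ℕ, j ≤ m →
      gb m j * ∏ i ∈ Finset.Icc 1 j, (1 - (X : Polynomial ℤ) ^ i)
        = ∏ i ∈ Finset.Icc 1 j, (1 - (X : Polynomial ℤ) ^ (m - j + i)))
    (c d a : ℕ) :
    ∑ p ∈ Finset.HasAntidiagonal.antidiagonal a,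
        X ^ ((c + 2) * p.2) * gb (c + p.1) p.1 * gb (d + p.2) p.2
      = gb (c + d + a + 2) a
        - X ^ (c + 1) * (if a = 0 then 0 else gb (c + d + a + 1) (a - 1)) := by
  have hcoeff (m k : ℕ) : gb (m + k) k = PowerSeries.coeff k (qBinomSeries (X : ℤ[X]) m) :=
    eq_coeff_qBinomSeries_of_mul_prod m k (by simpa using hgb (m + k) k (Nat.le_add_left k m))
  have hgen := congrArg (PowerSeries.coeff a)
    (qBinomSeries_mul_rescale_qBinomSeries (X : ℤ[X]) c d 1)
  rw [PowerSeries.coeff_mul, mul_comm (qPoch _ _ _), coeff_mul_qPoch_one] at hgen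
  have hcorner : (if a = 0 then 0 else gb (c + d + a + 1) (a - 1)) =
      if a = 0 then 0
      else PowerSeries.coeff (a - 1) (qBinomSeries (X : ℤ[X]) (c + 1 + 1 + d)) := by
    split_ifs with ha
    · rfl
    · rw [show c + d + a + 1 = c + 1 + 1 + d + (a - 1) by omega, hcoeff]
  rw [hcorner, show c + d + a + 2 = c + 1 + 1 + d + a by ring, hcoeff, ← hgen]
  refine sum_congr rfl fun p _ => ?_
  rw [hcoeff, hcoeff, PowerSeries.coeff_rescale]
  ring

/-- The `n = 2` case of the generalized q-Vandermonde-type identity: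
`∑_{i+j=a} q^{(c+2)j} · [c+i choose i]_q · [d+j choose j]_q
  = [c+d+a+2 choose a]_q − q^{c+1} · [c+d+a+1 choose a−1]_q`,
where the last Gaussian binomial is interpreted as `0` when `a = 0`, and
`gb` is the Gaussian binomial coefficient characterized by the product formula. -/
theorem gaussBinomial_vandermonde_type_shifted
    (gb : ℕ → ℕ → Polynomial ℤ)
    (hgb : ∀ m j : ℕ, j ≤ m →
      gb m j * ∏ i ∈ Finset.Icc 1 j, (1 - (X : Polynomial ℤ) ^ i)
        = ∏ i ∈ Finset.Icc 1 j, (1 - (X : Polynomial ℤ) ^ (m - j + i)))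
    (hgb0 : ∀ m j : ℕ, m < j → gb m j = 0)
    (c d a : ℕ) :
    ∑ p ∈ Finset.HasAntidiagonal.antidiagonal a,
        X ^ ((c + 2) * p.2) * gb (c + p.1) p.1 * gb (d + p.2) p.2
      = gb (c + d + a + 2) a
        - X ^ (c + 1) * (if a = 0 then 0 else gb (c + d + a + 1) (a - 1)) :=
  gaussBinomial_vandermonde_type_shifted_general gb hgb c d a
end

section
/- For all integers k ≥ 2 and n ≥ k+1, the following identity of polynomials in ℤ[q] holds: ∑ q^{4 + 3i₀ + 2i₁ + i₂ + j₁ + 2j₂ + 4j₃ + i₀j₁ + i₀j₂ + i₀j₃ + i₁j₂ + i₁j₃ + i₂j₃} · [i₀+j₀ choose i₀]_q · [i₁+j₁ choose i₁]_q · [i₂+j₂ choose i₂]_q · [i₃+j₃ choose i₃]_q = q⁴·[k+1 choose 3]_q·[n+1 choose k+2]_q − q⁷·[k+2 choose 4]_q·[n choose k+2]_q + q⁸·[k+1 choose 4]_q·[n choose k+2]_q, where the sum ranges over all tuples of nonnegative integers (i₀,i₁,i₂,i₃,j₀,j₁,j₂,j₃) with i₀+i₁+i₂+i₃ = k−2 and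 j₀+j₁+j₂+j₃ = n−k−1. -/
/-!
`[a + b choose a]_q` is the coefficient of `t ^ b` in `∏_{i ≤ a} 1 / (1 - q^i t)`, and the factor
`q^{c b}` shifts all exponents `i` by `c`. Under the weight
`q^{(i₀+1) j₁ + (i₀+i₁+2) j₂ + (i₀+i₁+i₂+4) j₃}` the four blocks of factors together run over
`i = 0, …, k + 2` except `i = i₀+i₁+i₂+3`, so the inner sum over `j` is the `t^{n-k-1}` coefficient
of the full product times `1 - q^{i₀+i₁+i₂+3} t`: two Gaussian binomials in `n`. The remaining sums
over `i` are coefficients of products of the same kind.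
-/

open Polynomial Finset

theorem Finset.prod_Icc_one_eq_prod_range {M : Type*} [CommMonoid M] (f : ℕ → M) (j : ℕ) :
    ∏ i ∈ Icc 1 j, f i = ∏ i ∈ range j, f (i + 1) := by
  rw [← Ico_add_one_right_eq_Icc, prod_Ico_eq_prod_range, Nat.add_sub_cancel]
  simp only [add_comm 1]

noncomputable def qBinom (R : Type*) [Semiring R] : ℕ → ℕ → R[X]
  | _, 0 => 1
  | 0, _ + 1 => 0
  | m + 1, j + 1 => qBinom R m j + X ^ (j + 1) * qBinom R m (j + 1)

section qBinom

variable {R : Type*}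

section Semiring

variable [Semiring R]

@[simp]
theorem qBinom_zero_right (m : ℕ) : qBinom R m 0 = 1 := by
  cases m <;> rfl

theorem qBinom_succ_succ (m j : ℕ) :
    qBinom R (m + 1) (j + 1) = qBinom R m j + X ^ (j + 1) * qBinom R m (j + 1) := rfl

theorem qBinom_eq_zero_of_lt : ∀ {m j : ℕ}, m < j → qBinom R m j = 0
  | 0, _ + 1, _ => rfl
  | m + 1, j + 1, h => by
    rw [qBinom_succ_succ, qBinom_eq_zero_of_lt (by omega : m < j),
      qBinom_eq_zero_of_lt (by omega : m < j + 1), mul_zero, add_zero]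

@[simp]
theorem qBinom_self : ∀ m : ℕ, qBinom R m m = 1
  | 0 => rfl
  | m + 1 => by
    rw [qBinom_succ_succ, qBinom_self m, qBinom_eq_zero_of_lt (Nat.lt_succ_self m), mul_zero,
      add_zero]

end Semiring

variable [CommRing R]

theorem qBinom_mul_prod_range (m j : ℕ) :
    qBinom R m j * ∏ i ∈ range j, (1 - X ^ (i + 1)) = ∏ i ∈ range j, (1 - X ^ (m - i)) := by
  induction m generalizing j with
  | zero =>
    cases j with
    | zero => simp
    | succ j => simp [qBinom_eq_zero_of_lt (Nat.succ_pos j), prod_range_succ']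
  | succ m ih =>
    cases j with
    | zero => simp
    | succ j =>
      rw [qBinom_succ_succ, prod_range_succ, prod_range_succ', add_mul, mul_assoc,
        ← mul_assoc (qBinom R m j), ih, ← prod_range_succ, ih, prod_range_succ]
      simp only [Nat.add_sub_add_right, Nat.sub_zero]
      rcases le_or_gt j m with hjm | hmj
      · have hpow : (X : R[X]) ^ (j + 1) * X ^ (m - j) = X ^ (m + 1) := by
          rw [← pow_add]; congr 1; omega
        linear_combination -(∏ i ∈ range j, (1 - X ^ (m - i) : R[X])) * hpow
      · have hzero : ∏ i ∈ range j, (1 - X ^ (m - i) : R[X]) = 0 :=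
          prod_eq_zero (mem_range.2 hmj) (by simp)
        simp [hzero]

theorem qBinom_mul_prod_Icc {m j : ℕ} (h : j ≤ m) :
    qBinom R m j * ∏ i ∈ Icc 1 j, (1 - X ^ i) = ∏ i ∈ Icc 1 j, (1 - X ^ (m - j + i)) := by
  rw [prod_Icc_one_eq_prod_range, prod_Icc_one_eq_prod_range, qBinom_mul_prod_range,
    ← prod_range_reflect]
  exact prod_congr rfl fun i hi => by
    rw [show m - (j - 1 - i) = m - j + (i + 1) by have := mem_range.1 hi; omega]

theorem eq_qBinom_of_mul_prod_Icc [IsDomain R] (b : ℕ → ℕ → R[X])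
    (hb : ∀ m j : ℕ, j ≤ m →
      b m j * ∏ i ∈ Icc 1 j, (1 - X ^ i) = ∏ i ∈ Icc 1 j, (1 - X ^ (m - j + i)))
    (hb0 : ∀ m j : ℕ, m < j → b m j = 0) :
    b = qBinom R := by
  ext1 m; ext1 j
  rcases lt_or_ge m j with hmj | hjm
  · rw [hb0 m j hmj, qBinom_eq_zero_of_lt hmj]
  · have hprod : ∏ i ∈ Icc 1 j, (1 - X ^ i : R[X]) ≠ 0 := prod_ne_zero_iff.2 fun i hi => by
      rw [← neg_sub, neg_ne_zero, ← C_1]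
      exact X_pow_sub_C_ne_zero (mem_Icc.1 hi).1 1
    exact mul_right_cancel₀ hprod ((hb m j hjm).trans (qBinom_mul_prod_Icc hjm).symm)

end qBinom

theorem PowerSeries.coeff_prod_univ_fin {A : Type*} [CommSemiring A] {k : ℕ}
    (φ : Fin k → PowerSeries A) (N : ℕ) :
    coeff N (∏ i, φ i) = ∑ g ∈ Nat.antidiagonalTuple k N, ∏ i, coeff (g i) (φ i) := by
  rw [coeff_prod, ← piAntidiag_univ_fin_eq_antidiagonalTuple, finsuppAntidiag, sum_map,
    ← sum_attach (piAntidiag univ N)]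
  rfl

theorem PowerSeries.coeff_mul_one_sub_C_mul_X {A : Type*} [CommRing A]
    (φ : PowerSeries A) (a : A) (N : ℕ) :
    coeff N (φ * (1 - C a * X)) = coeff N φ - a * coeff N (X * φ) := by
  rw [mul_sub, mul_one, map_sub, show φ * (C a * X) = C a * (X * φ) by ring, coeff_C_mul]

/-- `1 / (1 - q^e t)`, with `q = Polynomial.X` and `t = PowerSeries.X`. -/
noncomputable def qGeom (R : Type*) [CommSemiring R] (e : ℕ) : PowerSeries R[X] :=
  PowerSeries.rescale (X ^ e) (PowerSeries.mk 1)

noncomputable def qGeomProd (R : Type*) [CommSemiring R] (e m : ℕ) : PowerSeries R[X] :=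
  ∏ i ∈ range m, qGeom R (e + i)

section qGeom

variable {R : Type*}

section CommSemiring

variable [CommSemiring R]

theorem coeff_qGeom (e n : ℕ) : PowerSeries.coeff n (qGeom R e) = X ^ (e * n) := by
  simp [qGeom, PowerSeries.coeff_rescale, pow_mul]

theorem qGeomProd_mul_qGeomProd {e a e' : ℕ} (h : e + a = e') (b : ℕ) :
    qGeomProd R e a * qGeomProd R e' b = qGeomProd R e (a + b) := by
  simp only [qGeomProd, prod_range_add, ← h, add_assoc]

theorem qGeomProd_eq_rescale (e m : ℕ) :
    qGeomProd R e m = PowerSeries.rescale (X ^ e) (qGeomProd R 0 m) := by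
  simp only [qGeomProd, map_prod, zero_add]
  refine prod_congr rfl fun i _ => ?_
  ext n
  simp [qGeom, PowerSeries.coeff_rescale, pow_add, mul_pow]

theorem coeff_qGeomProd_eq_X_pow_mul (e m N : ℕ) :
    PowerSeries.coeff N (qGeomProd R e m)
      = X ^ (e * N) * PowerSeries.coeff N (qGeomProd R 0 m) := by
  rw [qGeomProd_eq_rescale, PowerSeries.coeff_rescale, pow_mul]

end CommSemiring

variable [CommRing R]

theorem qGeom_mul_one_sub (e : ℕ) :
    qGeom R e * (1 - PowerSeries.C (X ^ e) * PowerSeries.X) = 1 := by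
  rw [← PowerSeries.rescale_X, qGeom, ← map_one (PowerSeries.rescale (X ^ e : R[X])), ← map_sub,
    ← map_mul, PowerSeries.mk_one_mul_one_sub_eq_one, map_one]

theorem qGeomProd_mul_qGeomProd_succ {a a' : ℕ} (h : a + 1 = a') (b : ℕ) :
    qGeomProd R 0 a * qGeomProd R a' b
      = qGeomProd R 0 (a + b + 1) * (1 - PowerSeries.C (X ^ a) * PowerSeries.X) := by
  have hsplit : qGeomProd R 0 (a + b + 1) = qGeomProd R 0 a * qGeom R a * qGeomProd R a' b := by
    rw [add_right_comm, ← qGeomProd_mul_qGeomProd (by omega : 0 + (a + 1) = a')]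
    congr 1
    simp [qGeomProd, prod_range_succ]
  rw [hsplit, mul_right_comm, mul_assoc (qGeomProd R 0 a), qGeom_mul_one_sub, mul_one]

theorem coeff_qGeomProd_zero (m N : ℕ) :
    PowerSeries.coeff N (qGeomProd R 0 (m + 1)) = qBinom R (m + N) m := by
  induction m generalizing N with
  | zero => simp [qGeomProd, coeff_qGeom]
  | succ m ihm =>
    have hprod : qGeomProd R 0 (m + 2) * (1 - PowerSeries.C (X ^ (m + 1)) * PowerSeries.X)
        = qGeomProd R 0 (m + 1) := by
      simpa [qGeomProd] using (qGeomProd_mul_qGeomProd_succ (R := R) rfl 0).symm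
    have hrec (N : ℕ) :=
      PowerSeries.coeff_mul_one_sub_C_mul_X (qGeomProd R 0 (m + 2)) (X ^ (m + 1)) N
    rw [hprod] at hrec
    show PowerSeries.coeff N (qGeomProd R 0 (m + 2)) = _
    induction N with
    | zero => simpa [PowerSeries.coeff_zero_X_mul, ihm] using (hrec 0).symm
    | succ N ihN =>
      rw [show m + 1 + (N + 1) = m + N + 1 + 1 by ring, qBinom_succ_succ]
      have hstep := hrec (N + 1)
      rw [PowerSeries.coeff_succ_X_mul, ihN, ihm, add_right_comm m 1 N] at hstep
      linear_combination -hstep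

theorem coeff_X_mul_qGeomProd_zero (m N : ℕ) :
    PowerSeries.coeff N (PowerSeries.X * qGeomProd R 0 (m + 2)) = qBinom R (m + N) (m + 1) := by
  cases N with
  | zero => rw [PowerSeries.coeff_zero_X_mul, qBinom_eq_zero_of_lt (by omega)]
  | succ N => rw [PowerSeries.coeff_succ_X_mul, coeff_qGeomProd_zero]; ring_nf

theorem coeff_prod_qGeomProd {k : ℕ} (e f : Fin k → ℕ) (N : ℕ) :
    PowerSeries.coeff N (∏ i, qGeomProd R (e i) (f i + 1))
      = ∑ g ∈ Nat.antidiagonalTuple k N, ∏ i, X ^ (e i * g i) * qBinom R (f i + g i) (f i) := by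
  rw [PowerSeries.coeff_prod_univ_fin]
  refine sum_congr rfl fun g _ => prod_congr rfl fun i _ => ?_
  rw [coeff_qGeomProd_eq_X_pow_mul, coeff_qGeomProd_zero]

theorem sum_antidiagonalTuple_X_pow_three_two_one (K : ℕ) :
    ∑ f ∈ Nat.antidiagonalTuple 4 K, (X : R[X]) ^ (3 * f 0 + 2 * f 1 + f 2)
      = qBinom R (K + 3) 3 := by
  have hprod : ∏ i, qGeomProd R (![3, 2, 1, 0] i) ((0 : Fin 4 → ℕ) i + 1)
      = qGeomProd R 0 (3 + 1) := by
    simp [Fin.prod_univ_four, qGeomProd, prod_range_succ]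
    ring
  have hcoeff := coeff_prod_qGeomProd (R := R) (![3, 2, 1, 0] : Fin 4 → ℕ) 0 K
  rw [hprod, coeff_qGeomProd_zero] at hcoeff
  rw [add_comm K 3, hcoeff]
  refine sum_congr rfl fun g _ => ?_
  simp [Fin.prod_univ_four, pow_add]

theorem sum_antidiagonalTuple_X_pow_four_three_two (K : ℕ) :
    ∑ f ∈ Nat.antidiagonalTuple 4 K, (X : R[X]) ^ (4 * f 0 + 3 * f 1 + 2 * f 2)
      = qBinom R (K + 4) 4 - X * qBinom R (K + 3) 4 := by
  have hprod : ∏ i, qGeomProd R (![4, 3, 2, 0] i) ((0 : Fin 4 → ℕ) i + 1)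
      = qGeomProd R 0 (1 + 3 + 1) * (1 - PowerSeries.C (X ^ 1) * PowerSeries.X) := by
    rw [← qGeomProd_mul_qGeomProd_succ (a' := 2) rfl 3]
    simp [Fin.prod_univ_four, qGeomProd, prod_range_succ]
    ring
  have hcoeff := coeff_prod_qGeomProd (R := R) (![4, 3, 2, 0] : Fin 4 → ℕ) 0 K
  rw [hprod, PowerSeries.coeff_mul_one_sub_C_mul_X, coeff_qGeomProd_zero,
    coeff_X_mul_qGeomProd_zero, pow_one] at hcoeff
  rw [add_comm K 4, add_comm K 3, hcoeff]
  refine sum_congr rfl fun g _ => ?_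
  simp [Fin.prod_univ_four, pow_add]

theorem sum_antidiagonalTuple_configuration (f : Fin 4 → ℕ) {K : ℕ} (hf : ∑ i, f i = K) (N : ℕ) :
    ∑ g ∈ Nat.antidiagonalTuple 4 N,
        (X : R[X]) ^ (4 + 3 * f 0 + 2 * f 1 + f 2 + g 1 + 2 * g 2 + 4 * g 3
            + f 0 * g 1 + f 0 * g 2 + f 0 * g 3 + f 1 * g 2 + f 1 * g 3 + f 2 * g 3)
          * qBinom R (f 0 + g 0) (f 0) * qBinom R (f 1 + g 1) (f 1)
          * qBinom R (f 2 + g 2) (f 2) * qBinom R (f 3 + g 3) (f 3)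
      = X ^ (4 + 3 * f 0 + 2 * f 1 + f 2) * qBinom R (K + 4 + N) (K + 4)
        - X ^ (7 + 4 * f 0 + 3 * f 1 + 2 * f 2) * qBinom R (K + 3 + N) (K + 4) := by
  set e : Fin 4 → ℕ := ![0, f 0 + 1, f 0 + f 1 + 2, f 0 + f 1 + f 2 + 4]
  have hprod : ∏ i, qGeomProd R (e i) (f i + 1)
      = qGeomProd R 0 (K + 5)
          * (1 - PowerSeries.C (X ^ (f 0 + f 1 + f 2 + 3)) * PowerSeries.X) := by
    rw [Fin.sum_univ_four] at hf
    simp only [Fin.prod_univ_four, e, Matrix.cons_val]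
    rw [qGeomProd_mul_qGeomProd (zero_add _), qGeomProd_mul_qGeomProd (by omega),
      qGeomProd_mul_qGeomProd_succ (by omega),
      show f 0 + 1 + (f 1 + 1) + (f 2 + 1) + (f 3 + 1) + 1 = K + 5 by omega,
      show f 0 + 1 + (f 1 + 1) + (f 2 + 1) = f 0 + f 1 + f 2 + 3 by ring]
  have hcoeff := coeff_prod_qGeomProd (R := R) e f N
  rw [hprod, PowerSeries.coeff_mul_one_sub_C_mul_X,
    show PowerSeries.coeff N (qGeomProd R 0 (K + 5)) = qBinom R (K + 4 + N) (K + 4) from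
      coeff_qGeomProd_zero (K + 4) N,
    show PowerSeries.coeff N (PowerSeries.X * qGeomProd R 0 (K + 5))
        = qBinom R (K + 3 + N) (K + 4) from
      coeff_X_mul_qGeomProd_zero (K + 3) N] at hcoeff
  calc _ = X ^ (4 + 3 * f 0 + 2 * f 1 + f 2)
          * ∑ g ∈ Nat.antidiagonalTuple 4 N, ∏ i, X ^ (e i * g i) * qBinom R (f i + g i) (f i) := by
        rw [mul_sum]
        refine sum_congr rfl fun g _ => ?_
        simp only [Fin.prod_univ_four, e, Matrix.cons_val]
        ring
    _ = _ := by rw [← hcoeff]; ring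

end qGeom

/-- Contribution of the two-component configuration `(ij)–(ij')–(jj')`, `i < j < j'`,
to the Poincaré polynomial of `M̄₀,₀(G(k,n),2)`:
`∑ q^{4+3i₀+2i₁+i₂+j₁+2j₂+4j₃+i₀j₁+i₀j₂+i₀j₃+i₁j₂+i₁j₃+i₂j₃}
   [i₀+j₀ choose i₀]_q [i₁+j₁ choose i₁]_q [i₂+j₂ choose i₂]_q [i₃+j₃ choose i₃]_q
 = q⁴[k+1 choose 3]_q[n+1 choose k+2]_q − q⁷[k+2 choose 4]_q[n choose k+2]_q
   + q⁸[k+1 choose 4]_q[n choose k+2]_q`,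
where the sum is over nonnegative `(i₀,i₁,i₂,i₃)` with `i₀+i₁+i₂+i₃ = k−2` and
`(j₀,j₁,j₂,j₃)` with `j₀+j₁+j₂+j₃ = n−k−1`, and `gb` is the Gaussian binomial
coefficient characterized by the product formula. -/
theorem degree_two_configuration_contribution
    (gb : ℕ → ℕ → Polynomial ℤ)
    (hgb : ∀ m j : ℕ, j ≤ m →
      gb m j * ∏ i ∈ Finset.Icc 1 j, (1 - (X : Polynomial ℤ) ^ i)
        = ∏ i ∈ Finset.Icc 1 j, (1 - (X : Polynomial ℤ) ^ (m - j + i)))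
    (hgb0 : ∀ m j : ℕ, m < j → gb m j = 0)
    (k n : ℕ) (hk : 2 ≤ k) (hkn : k + 1 ≤ n) :
    ∑ f ∈ Finset.Nat.antidiagonalTuple 4 (k - 2),
      ∑ g ∈ Finset.Nat.antidiagonalTuple 4 (n - k - 1),
        (X : Polynomial ℤ) ^
            (4 + 3 * f 0 + 2 * f 1 + f 2 + g 1 + 2 * g 2 + 4 * g 3
              + f 0 * g 1 + f 0 * g 2 + f 0 * g 3 + f 1 * g 2 + f 1 * g 3 + f 2 * g 3)
          * gb (f 0 + g 0) (f 0) * gb (f 1 + g 1) (f 1)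
          * gb (f 2 + g 2) (f 2) * gb (f 3 + g 3) (f 3)
      = X ^ 4 * gb (k + 1) 3 * gb (n + 1) (k + 2)
        - X ^ 7 * gb (k + 2) 4 * gb n (k + 2)
        + X ^ 8 * gb (k + 1) 4 * gb n (k + 2) := by
  obtain rfl := eq_qBinom_of_mul_prod_Icc gb hgb hgb0
  obtain ⟨K, rfl⟩ : ∃ K, k = K + 2 := ⟨k - 2, by omega⟩
  obtain ⟨N, rfl⟩ : ∃ N, n = K + N + 3 := ⟨n - (K + 2) - 1, by omega⟩
  rw [show K + 2 - 2 = K by omega, show K + N + 3 - (K + 2) - 1 = N by omega,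
    sum_congr rfl fun f hf =>
      sum_antidiagonalTuple_configuration f (Nat.mem_antidiagonalTuple.1 hf) N]
  have hA : ∑ f ∈ Nat.antidiagonalTuple 4 K, (X : ℤ[X]) ^ (4 + 3 * f 0 + 2 * f 1 + f 2)
      = X ^ 4 * qBinom ℤ (K + 3) 3 := by
    rw [← sum_antidiagonalTuple_X_pow_three_two_one, mul_sum]
    exact sum_congr rfl fun f _ => by ring
  have hB : ∑ f ∈ Nat.antidiagonalTuple 4 K, (X : ℤ[X]) ^ (7 + 4 * f 0 + 3 * f 1 + 2 * f 2)
      = X ^ 7 * (qBinom ℤ (K + 4) 4 - X * qBinom ℤ (K + 3) 4) := by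
    rw [← sum_antidiagonalTuple_X_pow_four_three_two, mul_sum]
    exact sum_congr rfl fun f _ => by ring
  rw [sum_sub_distrib, ← sum_mul, ← sum_mul, hA, hB]
  ring_nf
end

section
/- For all integers n and k with 1 ≤ k ≤ n−1, let P(q) ∈ ℤ[q] be the quotient polynomial N₂(q)/D₂(q). Then 2·P(1) = C(n,k)·k·(n−k) + 2·C(n,k)·C(k(n−k)+1, 2), where C(a,b) denotes the ordinary binomial coefficient; that is, the Euler characteristic of the moduli stack of degree-2 genus-zero stable maps to G(k,n) equals the total number of torus-fixed points, namely (1/2)·C(n,k)·k·(n−k) fixed points with irreducible domain plus C(n,k)·C(k(n−k)+1, 2) fixed points with two-component domain. -/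
/-!
Writing `1 - q ^ a = (1 - q) [a]_q` with `[a]_q = 1 + q + ⋯ + q ^ (a - 1)`, the numerator becomes
`(1 - q) ^ 4 (1 + q) [k]_q [n - k]_q (1 + q ^ n + q [k]_q [n - k]_q) [n choose k]_q`, while
`D₂ = (1 - q) ^ 4 (1 + q) ^ 2`. Cancelling `(1 - q) ^ 4` and evaluating at `q = 1`, where `[a]_q = a`
and the Gaussian binomial is `C(n, k)`, gives `2 P(1) = C(n, k) k (n - k) (k (n - k) + 2)`.
-/

open Polynomial Finset

lemma prod_Icc_one_add_eq_factorial_mul_choose (m k : ℕ) :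
    ∏ i ∈ Icc 1 k, (m + i) = k.factorial * (m + k).choose k := by
  rw [← Nat.ascFactorial_eq_factorial_mul_choose, Nat.ascFactorial_eq_prod_range,
    ← Finset.Ico_add_one_right_eq_Icc, prod_Ico_eq_prod_range, Nat.add_sub_cancel]
  exact prod_congr rfl fun i _ => by ring

lemma Nat.two_mul_choose_two_add_one (x : ℕ) : 2 * (x + 1).choose 2 = (x + 1) * x := by
  have h := Nat.add_one_mul_choose_eq x 1
  rw [Nat.choose_one_right] at h
  rw [h, mul_comm]

section CommRing

variable {R : Type*} [CommRing R]

lemma prod_one_sub_pow (x : R) (s : Finset ℕ) (f : ℕ → ℕ) :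
    ∏ i ∈ s, (1 - x ^ f i) = (1 - x) ^ #s * ∏ i ∈ s, ∑ j ∈ range (f i), x ^ j := by
  simp_rw [← mul_neg_geom_sum x]
  rw [prod_mul_distrib, prod_const]

lemma Polynomial.one_sub_X_ne_zero [Nontrivial R] : (1 - X : R[X]) ≠ 0 := by
  rw [← neg_sub, neg_ne_zero, ← C_1]
  exact X_sub_C_ne_zero 1

lemma degree_two_numerator_eq (x : R) (a b : ℕ) :
    (1 - x ^ a) * (1 - x ^ b) * ((1 + x ^ (a + b)) * (1 + x ^ 3) - x * (1 + x) * (x ^ a + x ^ b))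
      = (1 - x) ^ 4 * (1 + x) * ((∑ j ∈ range a, x ^ j) * (∑ j ∈ range b, x ^ j)
          * (1 + x ^ (a + b) + x * (∑ j ∈ range a, x ^ j) * (∑ j ∈ range b, x ^ j))) := by
  have ha : x ^ a = 1 - (1 - x) * ∑ j ∈ range a, x ^ j := by rw [mul_neg_geom_sum]; ring
  have hb : x ^ b = 1 - (1 - x) * ∑ j ∈ range b, x ^ j := by rw [mul_neg_geom_sum]; ring
  rw [pow_add, ha, hb]
  ring

end CommRing

section Domain

variable {R : Type*} [CommRing R] [IsDomain R] [CharZero R]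

lemma eval_one_eq_choose_of_mul_prod_eq {g : R[X]} {m k : ℕ}
    (h : g * ∏ i ∈ Icc 1 k, (1 - X ^ i) = ∏ i ∈ Icc 1 k, (1 - X ^ (m + i))) :
    g.eval 1 = (m + k).choose k := by
  rw [prod_one_sub_pow, prod_one_sub_pow, mul_left_comm] at h
  have h1 := congrArg (eval 1) (mul_left_cancel₀ (pow_ne_zero _ one_sub_X_ne_zero) h)
  simp only [eval_mul, eval_prod, eval_geom_sum, one_pow, sum_const, card_range, nsmul_one] at h1
  have hfact : ∏ i ∈ Icc 1 k, i = k.factorial := by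
    simpa using prod_Icc_one_add_eq_factorial_mul_choose 0 k
  rw [← Nat.cast_prod, ← Nat.cast_prod, prod_Icc_one_add_eq_factorial_mul_choose, hfact,
    Nat.cast_mul, mul_comm] at h1
  exact mul_left_cancel₀ (Nat.cast_ne_zero.mpr k.factorial_ne_zero) h1

lemma two_mul_eval_one_eq_of_mul_eq {a b : ℕ} {g P : R[X]}
    (h : (1 - X ^ a) * (1 - X ^ b) * ((1 + X ^ (a + b)) * (1 + X ^ 3) - X * (1 + X) * (X ^ a + X ^ b))
        * g = P * ((1 - X) ^ 2 * (1 - X ^ 2) ^ 2)) :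
    2 * P.eval 1 = a * b * (a * b + 2) * g.eval 1 := by
  rw [degree_two_numerator_eq,
    show (1 - X : R[X]) ^ 2 * (1 - X ^ 2) ^ 2 = (1 - X) ^ 4 * (1 + X) ^ 2 by ring,
    mul_assoc, mul_assoc, mul_left_comm P] at h
  have h1 := congrArg (eval 1) (mul_left_cancel₀ (pow_ne_zero 4 one_sub_X_ne_zero) h)
  simp only [eval_mul, eval_add, eval_pow, eval_one, eval_X, eval_geom_sum, one_pow, sum_const,
    card_range, nsmul_one] at h1
  refine mul_left_cancel₀ (two_ne_zero (α := R)) ?_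
  linear_combination -h1

end Domain

theorem degree_two_euler_characteristic_general
    (gb : ℕ → ℕ → Polynomial ℤ)
    (hgb : ∀ m j : ℕ, j ≤ m →
      gb m j * ∏ i ∈ Finset.Icc 1 j, (1 - (X : Polynomial ℤ) ^ i)
        = ∏ i ∈ Finset.Icc 1 j, (1 - (X : Polynomial ℤ) ^ (m - j + i)))
    (n k : ℕ) (hkn : k ≤ n - 1)
    (P : Polynomial ℤ)
    (hP : (1 - (X : Polynomial ℤ) ^ k) * (1 - (X : Polynomial ℤ) ^ (n - k))
          * ((1 + X ^ n) * (1 + X ^ 3) - X * (1 + X) * (X ^ k + X ^ (n - k)))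
          * gb n k
        = P * ((1 - (X : Polynomial ℤ)) ^ 2 * (1 - X ^ 2) ^ 2)) :
    2 * P.eval 1
      = (n.choose k * (k * (n - k))
          + 2 * n.choose k * Nat.choose (k * (n - k) + 1) 2 : ℤ) := by
  obtain ⟨m, rfl⟩ : ∃ m, n = k + m := ⟨n - k, by omega⟩
  have hgbk := hgb (k + m) k (by omega)
  rw [Nat.add_sub_cancel_left] at hgbk hP ⊢
  have hchoose : (gb (k + m) k).eval 1 = (k + m).choose k := by
    rw [eval_one_eq_choose_of_mul_prod_eq hgbk, add_comm]
  have htwo : (2 * (k * m + 1).choose 2 : ℤ) = (k * m + 1) * (k * m) := by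
    exact_mod_cast Nat.two_mul_choose_two_add_one (k * m)
  rw [two_mul_eval_one_eq_of_mul_eq hP, hchoose]
  push_cast
  linear_combination -((k + m).choose k : ℤ) * htwo

/-- **Euler characteristic of `M̄₀,₀(G(k,n),2)` = number of torus-fixed points.**
For `1 ≤ k ≤ n−1`, if `P` is the quotient polynomial `N₂(q)/D₂(q)` (the Poincaré
polynomial of the moduli stack), then
`2·P(1) = C(n,k)·k·(n−k) + 2·C(n,k)·C(k(n−k)+1, 2)`, i.e. the Euler characteristic
`P(1)` equals `(1/2)C(n,k)k(n−k)` fixed points with irreducible domain plus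
`C(n,k)·C(k(n−k)+1,2)` fixed points with two-component domain.
Here `gb` is the Gaussian binomial coefficient characterized by the product formula. -/
theorem degree_two_euler_characteristic
    (gb : ℕ → ℕ → Polynomial ℤ)
    (hgb : ∀ m j : ℕ, j ≤ m →
      gb m j * ∏ i ∈ Finset.Icc 1 j, (1 - (X : Polynomial ℤ) ^ i)
        = ∏ i ∈ Finset.Icc 1 j, (1 - (X : Polynomial ℤ) ^ (m - j + i)))
    (hgb0 : ∀ m j : ℕ, m < j → gb m j = 0)
    (n k : ℕ) (hk : 1 ≤ k) (hkn : k ≤ n - 1)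
    (P : Polynomial ℤ)
    (hP : (1 - (X : Polynomial ℤ) ^ k) * (1 - (X : Polynomial ℤ) ^ (n - k))
          * ((1 + X ^ n) * (1 + X ^ 3) - X * (1 + X) * (X ^ k + X ^ (n - k)))
          * gb n k
        = P * ((1 - (X : Polynomial ℤ)) ^ 2 * (1 - X ^ 2) ^ 2)) :
    2 * P.eval 1
      = (n.choose k * (k * (n - k))
          + 2 * n.choose k * Nat.choose (k * (n - k) + 1) 2 : ℤ) :=
  degree_two_euler_characteristic_general gb hgb n k hkn P hP
end
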